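/- arXiv:2506.21870 — 4 statements merged into one kernel-verified Lean document; each statement's English description precedes it below -/
import Mathlib

section
/- Let (A,[·,·],·) be a finite-dimensional Poisson algebra over a field and r ∈ A⊗A. Then the following are equivalent: (1) r is a solution of the Poisson Yang–Baxter equation; (2) for all x*, y* ∈ A*, [r₊(x*), r₊(y*)] = r₊(−ad*(r₊(x*))y* + ad*(r₋(y*))x*) and r₊(x*)·r₊(y*) = r₊(L*(r₊(x*))y* + L*(r₋(y*))x*); (3) for all x*, y* ∈ A*, [r₋(x*), r₋(y*)] = r₋(−ad*(r₋(x*))y* + ad*(r₊(y*))x*) and r₋(x*)·r₋(y*) = r₋(L*(r₋(x*))y* + L*(r₊(y*))x*). -/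
/-! Pairing `C(r)` with `x* ⊗ y* ⊗ z*` gives `⟨z*, [r₊x*, r₊y*] − r₊[x*, y*]_r⟩`, and pairing
`A(r)` gives the analogous expression for the product once commutativity is used; since the
functionals `x* ⊗ y* ⊗ z*` separate the points of `A ⊗ A ⊗ A`, this is (1) ⇔ (2).
The flip `r ↦ −τ(r)` exchanges `r₊` and `r₋`, so (3) is (2) for `−τ(r)`. Antisymmetry and
commutativity give `C(τ r) = −σ₁₃ C(r)` and `A(τ r) = σ₁₃ A(r)`, so `−τ(r)` solves the PYBE
exactly when `r` does. -/

open TensorProduct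

section Preamble

variable {k A : Type*} [Field k] [AddCommGroup A] [Module k A]

/-- The Poisson algebra axioms for a pair of bilinear operations `br` (the Lie bracket)
and `mul` (the commutative associative product), including the Leibniz compatibility. -/
structure IsPoisson {k A : Type*} [Field k] [AddCommGroup A] [Module k A]
    (br mul : A →ₗ[k] A →ₗ[k] A) : Prop where
  antisymm : ∀ a b, br a b = - br b a
  jacobi : ∀ a b c, br a (br b c) = br (br a b) c + br b (br a c)
  comm : ∀ a b, mul a b = mul b a
  assoc : ∀ a b c, mul (mul a b) c = mul a (mul b c)
  leibniz : ∀ a b c, br a (mul b c) = mul (br a b) c + mul b (br a c)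

/-- `r ↦ r₊`, where `⟨r₊(x*), y*⟩ = ⟨r, x* ⊗ y*⟩`. -/
noncomputable def rPlus : (A ⊗[k] A) →ₗ[k] Module.Dual k A →ₗ[k] A :=
  TensorProduct.lift <| LinearMap.mk₂ k
    (fun a b => (Module.Dual.eval k A a).smulRight b)
    (fun a a' b => by ext f; simp [add_smul])
    (fun c a b => by ext f; simp [smul_smul])
    (fun a b b' => by ext f; simp)
    (fun c a b => by ext f; simp [smul_smul, mul_comm])

/-- The flip `τ : A ⊗ A → A ⊗ A`. -/
noncomputable def tauT : (A ⊗[k] A) →ₗ[k] A ⊗[k] A := (TensorProduct.comm k A A).toLinearMap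

/-- `r ↦ r₋`, where `⟨r₊(x*), y*⟩ = ⟨r, x* ⊗ y*⟩ = −⟨x*, r₋(y*)⟩`. -/
noncomputable def rMinus : (A ⊗[k] A) →ₗ[k] Module.Dual k A →ₗ[k] A :=
  - (rPlus ∘ₗ tauT)

@[simp] lemma rPlus_tmul (a b : A) (f : Module.Dual k A) :
    rPlus (a ⊗ₜ[k] b) f = f a • b := rfl

@[simp] lemma dualMap_add_apply (f g : A →ₗ[k] A) (y : Module.Dual k A) :
    (f + g).dualMap y = f.dualMap y + g.dualMap y := by ext a; simp

@[simp] lemma dualMap_smul_apply (c : k) (f : A →ₗ[k] A) (y : Module.Dual k A) :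
    (c • f).dualMap y = c • f.dualMap y := by ext a; simp

@[simp] lemma dualMap_neg_apply (f : A →ₗ[k] A) (y : Module.Dual k A) :
    (-f).dualMap y = - f.dualMap y := by ext a; simp

noncomputable def T1213 (m : A →ₗ[k] A →ₗ[k] A) :
    (A ⊗[k] A) ⊗[k] (A ⊗[k] A) →ₗ[k] A ⊗[k] (A ⊗[k] A) :=
  (TensorProduct.map (TensorProduct.lift m) LinearMap.id) ∘ₗ
    (TensorProduct.tensorTensorTensorComm k A A A A).toLinearMap

noncomputable def T1323 (m : A →ₗ[k] A →ₗ[k] A) :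
    (A ⊗[k] A) ⊗[k] (A ⊗[k] A) →ₗ[k] A ⊗[k] (A ⊗[k] A) :=
  (TensorProduct.assoc k A A A).toLinearMap ∘ₗ
    (TensorProduct.map LinearMap.id (TensorProduct.lift m)) ∘ₗ
    (TensorProduct.tensorTensorTensorComm k A A A A).toLinearMap

noncomputable def T2312 (m : A →ₗ[k] A →ₗ[k] A) :
    (A ⊗[k] A) ⊗[k] (A ⊗[k] A) →ₗ[k] A ⊗[k] (A ⊗[k] A) :=
  (TensorProduct.leftComm k A A A).toLinearMap ∘ₗ
    (TensorProduct.map (TensorProduct.lift m ∘ₗ (TensorProduct.comm k A A).toLinearMap)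
      LinearMap.id) ∘ₗ
    (TensorProduct.tensorTensorTensorComm k A A A A).toLinearMap ∘ₗ
    (TensorProduct.map (TensorProduct.comm k A A).toLinearMap LinearMap.id)

noncomputable def T1223 (m : A →ₗ[k] A →ₗ[k] A) :
    (A ⊗[k] A) ⊗[k] (A ⊗[k] A) →ₗ[k] A ⊗[k] (A ⊗[k] A) :=
  (TensorProduct.leftComm k A A A).toLinearMap ∘ₗ
    (TensorProduct.map (TensorProduct.lift m) LinearMap.id) ∘ₗ
    (TensorProduct.tensorTensorTensorComm k A A A A).toLinearMap ∘ₗ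
    (TensorProduct.map (TensorProduct.comm k A A).toLinearMap LinearMap.id)

/-- `C(r) = [r₁₂,r₁₃] + [r₁₃,r₂₃] + [r₁₂,r₂₃]` for the bracket `br`. -/
noncomputable def cybe (br : A →ₗ[k] A →ₗ[k] A) (r : A ⊗[k] A) : A ⊗[k] (A ⊗[k] A) :=
  T1213 br (r ⊗ₜ[k] r) + T1323 br (r ⊗ₜ[k] r) + T1223 br (r ⊗ₜ[k] r)

/-- `A(r) = r₁₂·r₁₃ + r₁₃·r₂₃ − r₂₃·r₁₂` for the product `mul`. -/
noncomputable def aybe (mul : A →ₗ[k] A →ₗ[k] A) (r : A ⊗[k] A) : A ⊗[k] (A ⊗[k] A) :=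
  T1213 mul (r ⊗ₜ[k] r) + T1323 mul (r ⊗ₜ[k] r) - T2312 mul (r ⊗ₜ[k] r)

/-- `r` is a solution of the Poisson Yang–Baxter equation: `C(r) = 0` and `A(r) = 0`. -/
def IsPYBESolution (br mul : A →ₗ[k] A →ₗ[k] A) (r : A ⊗[k] A) : Prop :=
  cybe br r = 0 ∧ aybe mul r = 0

variable (k A) in
/-- `σ₁₃ : a ⊗ b ⊗ c ↦ c ⊗ b ⊗ a`. -/
noncomputable def sigma13 : A ⊗[k] (A ⊗[k] A) →ₗ[k] A ⊗[k] (A ⊗[k] A) :=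
  (TensorProduct.map LinearMap.id (TensorProduct.comm k A A).toLinearMap) ∘ₗ
    (TensorProduct.leftComm k A A A).toLinearMap ∘ₗ
    (TensorProduct.map LinearMap.id (TensorProduct.comm k A A).toLinearMap)

/-- `s ∈ A ⊗ A` is `(ad, L)`-invariant:
`(ad(a)⊗id + id⊗ad(a))(s) = 0` and `(L(a)⊗id − id⊗L(a))(s) = 0` for all `a`. -/
def IsAdLInvariant (br mul : A →ₗ[k] A →ₗ[k] A) (s : A ⊗[k] A) : Prop :=
  ∀ a : A,
    TensorProduct.map (br a) LinearMap.id s + TensorProduct.map LinearMap.id (br a) s = 0 ∧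
    TensorProduct.map (mul a) LinearMap.id s - TensorProduct.map LinearMap.id (mul a) s = 0

/-- The bracket `[x*,y*]_r = −ad*(r₊(x*))y* + ad*(r₋(y*))x*` on the dual space. -/
noncomputable def dualBr (br : A →ₗ[k] A →ₗ[k] A) (r : A ⊗[k] A) :
    Module.Dual k A →ₗ[k] Module.Dual k A →ₗ[k] Module.Dual k A :=
  LinearMap.mk₂ k
    (fun x y => - (br (rPlus r x)).dualMap y + (br (rMinus r y)).dualMap x)
    (fun x x' y => by simp [map_add]; try abel)
    (fun c x y => by simp [map_smul, smul_add]; try abel)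
    (fun x y y' => by simp [map_add]; try abel)
    (fun c x y => by simp [map_smul, smul_add]; try abel)

/-- The product `x*·_r y* = L*(r₊(x*))y* + L*(r₋(y*))x*` on the dual space. -/
noncomputable def dualMul (mul : A →ₗ[k] A →ₗ[k] A) (r : A ⊗[k] A) :
    Module.Dual k A →ₗ[k] Module.Dual k A →ₗ[k] Module.Dual k A :=
  LinearMap.mk₂ k
    (fun x y => (mul (rPlus r x)).dualMap y + (mul (rMinus r y)).dualMap x)
    (fun x x' y => by simp [map_add]; try abel)
    (fun c x y => by simp [map_smul, smul_add]; try abel)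
    (fun x y y' => by simp [map_add]; try abel)
    (fun c x y => by simp [map_smul, smul_add]; try abel)

/-- The descendent operation `a ∘_P b = (P a) ∘ b + a ∘ (P b) + λ a ∘ b`. -/
noncomputable def descOp (m : A →ₗ[k] A →ₗ[k] A) (lam : k) (P : A →ₗ[k] A) :
    A →ₗ[k] A →ₗ[k] A :=
  LinearMap.mk₂ k
    (fun a b => m (P a) b + m a (P b) + lam • m a b)
    (fun a a' b => by simp [map_add, smul_add]; try abel)
    (fun c a b => by simp [map_smul, smul_add, smul_smul, mul_comm]; try abel)
    (fun a b b' => by simp [map_add, smul_add]; try abel)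
    (fun c a b => by simp [map_smul, smul_add, smul_smul, mul_comm]; try abel)

/-- `P` is a Rota–Baxter operator of weight `λ` on the Poisson algebra `(A, br, mul)`. -/
def IsRotaBaxter (br mul : A →ₗ[k] A →ₗ[k] A) (lam : k) (P : A →ₗ[k] A) : Prop :=
  (∀ a b, br (P a) (P b) = P (br (P a) b + br a (P b) + lam • br a b)) ∧
  (∀ a b, mul (P a) (P b) = P (mul (P a) b + mul a (P b) + lam • mul a b))

/-- `((A, br, mul), B, P)` is a quadratic Rota–Baxter Poisson algebra of weight `λ`. -/
structure IsQuadraticRotaBaxter {k A : Type*} [Field k] [AddCommGroup A] [Module k A]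
    (br mul : A →ₗ[k] A →ₗ[k] A) (B : A →ₗ[k] A →ₗ[k] k) (lam : k) (P : A →ₗ[k] A) :
    Prop where
  poisson : IsPoisson br mul
  symm : ∀ a b, B a b = B b a
  nondeg : ∀ a, (∀ b, B a b = 0) → a = 0
  br_invariant : ∀ a b c, B (br a b) c = B a (br b c)
  mul_invariant : ∀ a b c, B (mul a b) c = B a (mul b c)
  rb : IsRotaBaxter br mul lam P
  compat : ∀ a b, B a (P b) + B (P a) b + lam • B a b = 0

/-- The semidirect-product bracket on `A ⊕ A*`:
`[(a,x*),(b,y*)] = ([a,b], −ad*(a)y* + ad*(b)x*)`. -/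
noncomputable def sdBr (br : A →ₗ[k] A →ₗ[k] A) :
    (A × Module.Dual k A) →ₗ[k] (A × Module.Dual k A) →ₗ[k] (A × Module.Dual k A) :=
  LinearMap.mk₂ k
    (fun p q => (br p.1 q.1, - (br p.1).dualMap q.2 + (br q.1).dualMap p.2))
    (fun p p' q => by simp [Prod.ext_iff, map_add]; try abel)
    (fun c p q => by simp [Prod.ext_iff, map_smul, smul_add]; try abel)
    (fun p q q' => by simp [Prod.ext_iff, map_add]; try abel)
    (fun c p q => by simp [Prod.ext_iff, map_smul, smul_add]; try abel)

/-- The semidirect-product multiplication on `A ⊕ A*`: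
`(a,x*)·(b,y*) = (a·b, L*(a)y* + L*(b)x*)`. -/
noncomputable def sdMul (mul : A →ₗ[k] A →ₗ[k] A) :
    (A × Module.Dual k A) →ₗ[k] (A × Module.Dual k A) →ₗ[k] (A × Module.Dual k A) :=
  LinearMap.mk₂ k
    (fun p q => (mul p.1 q.1, (mul p.1).dualMap q.2 + (mul q.1).dualMap p.2))
    (fun p p' q => by simp [Prod.ext_iff, map_add]; try abel)
    (fun c p q => by simp [Prod.ext_iff, map_smul, smul_add]; try abel)
    (fun p q q' => by simp [Prod.ext_iff, map_add]; try abel)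
    (fun c p q => by simp [Prod.ext_iff, map_smul, smul_add]; try abel)

/-- The canonical bilinear form `𝔅_d((a,x*),(b,y*)) = ⟨a,y*⟩ + ⟨b,x*⟩` on `A ⊕ A*`. -/
noncomputable def sdForm :
    (A × Module.Dual k A) →ₗ[k] (A × Module.Dual k A) →ₗ[k] k :=
  LinearMap.mk₂ k
    (fun p q => q.2 p.1 + p.2 q.1)
    (fun p p' q => by simp; try ring)
    (fun c p q => by simp [smul_add, smul_smul]; try ring)
    (fun p q q' => by simp; try ring)
    (fun c p q => by simp [smul_add, smul_smul]; try ring)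

end Preamble

section PoissonYangBaxter

lemma TensorProduct.apply_tmul_eq_of_tmul_tmul {R M N P Q S : Type*} [CommSemiring R]
    [AddCommMonoid M] [Module R M] [AddCommMonoid N] [Module R N] [AddCommMonoid P] [Module R P]
    [AddCommMonoid Q] [Module R Q] [AddCommMonoid S] [Module R S]
    {f : (M ⊗[R] N) ⊗[R] (P ⊗[R] Q) →ₗ[R] S} {B : (M ⊗[R] N) →ₗ[R] (P ⊗[R] Q) →ₗ[R] S}
    (h : ∀ a b c d, f ((a ⊗ₜ b) ⊗ₜ (c ⊗ₜ d)) = B (a ⊗ₜ b) (c ⊗ₜ d))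
    (r : M ⊗[R] N) (s : P ⊗[R] Q) : f (r ⊗ₜ s) = B r s :=
  LinearMap.congr_fun (TensorProduct.ext_fourfold' (ψ := TensorProduct.lift B) (by simpa using h))
    (r ⊗ₜ s)

variable {k A : Type*} [Field k] [AddCommGroup A] [Module k A]

noncomputable def pair3 (x y z : Module.Dual k A) : Module.Dual k (A ⊗[k] (A ⊗[k] A)) :=
  TensorProduct.dualDistrib k A (A ⊗[k] A) (x ⊗ₜ TensorProduct.dualDistrib k A A (y ⊗ₜ z))

@[simp] lemma pair3_tmul (x y z : Module.Dual k A) (a b c : A) :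
    pair3 x y z (a ⊗ₜ[k] (b ⊗ₜ[k] c)) = x a * (y b * z c) := by
  simp [pair3]

lemma pair3_ext {t t' : A ⊗[k] (A ⊗[k] A)}
    (h : ∀ x y z, pair3 x y z t = pair3 x y z t') : t = t' := by
  let b := Module.Free.chooseBasis k A
  let b3 := b.tensorProduct (b.tensorProduct b)
  have coord_eq : ∀ i j l, b3.coord (i, j, l) = pair3 (b.coord i) (b.coord j) (b.coord l) :=
    fun i j l => TensorProduct.ext_threefold' fun a c d => by
      simp only [b3, Module.Basis.coord_apply, Module.Basis.tensorProduct_repr_tmul_apply,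
        smul_eq_mul, pair3_tmul]
      ring
  refine b3.ext_elem fun ⟨i, j, l⟩ => ?_
  simpa only [← Module.Basis.coord_apply, coord_eq] using h _ _ _

@[simp] lemma sigma13_tmul (a b c : A) :
    sigma13 k A (a ⊗ₜ (b ⊗ₜ c)) = c ⊗ₜ (b ⊗ₜ a) := by
  simp [sigma13]

lemma pair3_sigma13 (x y z : Module.Dual k A) (t : A ⊗[k] (A ⊗[k] A)) :
    pair3 x y z (sigma13 k A t) = pair3 z y x t := by
  have : pair3 x y z ∘ₗ sigma13 k A = pair3 z y x :=
    TensorProduct.ext_threefold' fun a b c => by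
      simp only [LinearMap.coe_comp, Function.comp_apply, sigma13_tmul, pair3_tmul]
      ring
  exact LinearMap.congr_fun this t

lemma sigma13_involutive : Function.Involutive (sigma13 k A) :=
  fun t => pair3_ext fun x y z => by rw [pair3_sigma13, pair3_sigma13]

@[simp] lemma tauT_tmul (a b : A) : tauT (a ⊗ₜ[k] b) = b ⊗ₜ[k] a := rfl

@[simp] lemma tauT_tauT (r : A ⊗[k] A) : tauT (tauT r) = r :=
  (TensorProduct.comm k A A).symm_apply_apply r

lemma rMinus_apply (r : A ⊗[k] A) (f : Module.Dual k A) :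
    rMinus r f = - rPlus (tauT r) f := rfl

lemma apply_rPlus_tauT (r : A ⊗[k] A) (f g : Module.Dual k A) :
    f (rPlus (tauT r) g) = g (rPlus r f) := by
  induction r using TensorProduct.induction_on with
  | zero => simp
  | tmul a b => simp [mul_comm]
  | add r s hr hs => simp [map_add, hr, hs]

lemma rPlus_neg_tauT (r : A ⊗[k] A) : rPlus (-tauT r) = rMinus r := by
  rw [map_neg]; rfl

lemma rMinus_neg_tauT (r : A ⊗[k] A) : rMinus (-tauT r) = rPlus r := by
  ext f; simp [rMinus_apply]

section Pairing

variable (m : A →ₗ[k] A →ₗ[k] A) (x y z : Module.Dual k A) (r s : A ⊗[k] A)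

@[simp] lemma T1213_tmul (a b c d : A) :
    T1213 m ((a ⊗ₜ b) ⊗ₜ (c ⊗ₜ d)) = m a c ⊗ₜ (b ⊗ₜ[k] d) := by
  simp [T1213]

@[simp] lemma T1323_tmul (a b c d : A) :
    T1323 m ((a ⊗ₜ b) ⊗ₜ (c ⊗ₜ d)) = a ⊗ₜ (c ⊗ₜ[k] m b d) := by
  simp [T1323]

@[simp] lemma T2312_tmul (a b c d : A) :
    T2312 m ((a ⊗ₜ b) ⊗ₜ (c ⊗ₜ d)) = a ⊗ₜ (m c b ⊗ₜ[k] d) := by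
  simp [T2312]

@[simp] lemma T1223_tmul (a b c d : A) :
    T1223 m ((a ⊗ₜ b) ⊗ₜ (c ⊗ₜ d)) = a ⊗ₜ (m b c ⊗ₜ[k] d) := by
  simp [T1223]

lemma pair3_T1213 :
    pair3 x y z (T1213 m (r ⊗ₜ s)) = x (m (rPlus (tauT r) y) (rPlus (tauT s) z)) :=
  TensorProduct.apply_tmul_eq_of_tmul_tmul (f := pair3 x y z ∘ₗ T1213 m)
    (B := (m.compr₂ x).compl₁₂ (rPlus.flip y ∘ₗ tauT) (rPlus.flip z ∘ₗ tauT))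
    (fun a b c d => by
      simp only [LinearMap.coe_comp, Function.comp_apply, T1213_tmul, pair3_tmul,
        LinearMap.compl₁₂_apply, tauT_tmul, LinearMap.flip_apply, rPlus_tmul, map_smul,
        LinearMap.smul_apply, LinearMap.compr₂_apply, smul_eq_mul]
      ring) r s

lemma pair3_T1323 :
    pair3 x y z (T1323 m (r ⊗ₜ s)) = z (m (rPlus r x) (rPlus s y)) :=
  TensorProduct.apply_tmul_eq_of_tmul_tmul (f := pair3 x y z ∘ₗ T1323 m)
    (B := (m.compr₂ z).compl₁₂ (rPlus.flip x) (rPlus.flip y))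
    (fun a b c d => by
      simp only [LinearMap.coe_comp, Function.comp_apply, T1323_tmul, pair3_tmul,
        LinearMap.compl₁₂_apply, LinearMap.flip_apply, rPlus_tmul, map_smul,
        LinearMap.smul_apply, LinearMap.compr₂_apply, smul_eq_mul]
      ring) r s

lemma pair3_T2312 :
    pair3 x y z (T2312 m (r ⊗ₜ s)) = y (m (rPlus (tauT s) z) (rPlus r x)) :=
  TensorProduct.apply_tmul_eq_of_tmul_tmul (f := pair3 x y z ∘ₗ T2312 m)
    (B := (m.compr₂ y).flip.compl₁₂ (rPlus.flip x) (rPlus.flip z ∘ₗ tauT))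
    (fun a b c d => by
      simp only [LinearMap.coe_comp, Function.comp_apply, T2312_tmul, pair3_tmul,
        LinearMap.compl₁₂_apply, LinearMap.flip_apply, rPlus_tmul, map_smul, tauT_tmul,
        LinearMap.smul_apply, LinearMap.compr₂_apply, smul_eq_mul]
      ring) r s

lemma pair3_T1223 :
    pair3 x y z (T1223 m (r ⊗ₜ s)) = y (m (rPlus r x) (rPlus (tauT s) z)) :=
  TensorProduct.apply_tmul_eq_of_tmul_tmul (f := pair3 x y z ∘ₗ T1223 m)
    (B := (m.compr₂ y).compl₁₂ (rPlus.flip x) (rPlus.flip z ∘ₗ tauT))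
    (fun a b c d => by
      simp only [LinearMap.coe_comp, Function.comp_apply, T1223_tmul, pair3_tmul,
        LinearMap.compl₁₂_apply, LinearMap.flip_apply, rPlus_tmul, map_smul, tauT_tmul,
        LinearMap.smul_apply, LinearMap.compr₂_apply, smul_eq_mul]
      ring) r s

lemma pair3_cybe (br : A →ₗ[k] A →ₗ[k] A) :
    pair3 x y z (cybe br r) =
      x (br (rPlus (tauT r) y) (rPlus (tauT r) z)) + z (br (rPlus r x) (rPlus r y))
        + y (br (rPlus r x) (rPlus (tauT r) z)) := by
  simp only [cybe, map_add, pair3_T1213, pair3_T1323, pair3_T1223]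

lemma pair3_aybe (mul : A →ₗ[k] A →ₗ[k] A) :
    pair3 x y z (aybe mul r) =
      x (mul (rPlus (tauT r) y) (rPlus (tauT r) z)) + z (mul (rPlus r x) (rPlus r y))
        - y (mul (rPlus (tauT r) z) (rPlus r x)) := by
  simp only [aybe, map_add, map_sub, pair3_T1213, pair3_T1323, pair3_T2312]

end Pairing

section YangBaxter

variable {br mul : A →ₗ[k] A →ₗ[k] A} (r : A ⊗[k] A)

lemma pair3_cybe_eq_dualBr (x y z : Module.Dual k A) :
    pair3 x y z (cybe br r) = z (br (rPlus r x) (rPlus r y) - rPlus r (dualBr br r x y)) := by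
  rw [pair3_cybe, map_sub, ← apply_rPlus_tauT]
  simp only [dualBr, LinearMap.mk₂_apply, rMinus_apply, map_neg, dualMap_neg_apply,
    LinearMap.add_apply, LinearMap.neg_apply, LinearMap.dualMap_apply]
  ring

lemma pair3_aybe_eq_dualMul (hcomm : ∀ a b, mul a b = mul b a) (x y z : Module.Dual k A) :
    pair3 x y z (aybe mul r) = z (mul (rPlus r x) (rPlus r y) - rPlus r (dualMul mul r x y)) := by
  rw [pair3_aybe, map_sub, ← apply_rPlus_tauT, hcomm (rPlus (tauT r) z)]
  simp only [dualMul, LinearMap.mk₂_apply, rMinus_apply, map_neg, dualMap_neg_apply,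
    LinearMap.add_apply, LinearMap.neg_apply, LinearMap.dualMap_apply]
  ring

lemma eq_zero_iff_of_pair3_eq {t : A ⊗[k] (A ⊗[k] A)} {F : Module.Dual k A → Module.Dual k A → A}
    (h : ∀ x y z, pair3 x y z t = z (F x y)) : t = 0 ↔ ∀ x y, F x y = 0 := by
  refine ⟨fun ht x y => ?_, fun hF => pair3_ext fun x y z => by simp [h, hF]⟩
  rw [← Module.forall_dual_apply_eq_zero_iff k]
  intro z
  rw [← h, ht, map_zero]

lemma cybe_eq_zero_iff :
    cybe br r = 0 ↔ ∀ x y, br (rPlus r x) (rPlus r y) = rPlus r (dualBr br r x y) := by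
  simp only [eq_zero_iff_of_pair3_eq (pair3_cybe_eq_dualBr r), sub_eq_zero]

lemma aybe_eq_zero_iff (hcomm : ∀ a b, mul a b = mul b a) :
    aybe mul r = 0 ↔ ∀ x y, mul (rPlus r x) (rPlus r y) = rPlus r (dualMul mul r x y) := by
  simp only [eq_zero_iff_of_pair3_eq (pair3_aybe_eq_dualMul r hcomm), sub_eq_zero]

lemma isPYBESolution_iff_rPlus (hcomm : ∀ a b, mul a b = mul b a) :
    IsPYBESolution br mul r ↔ ∀ x y,
      br (rPlus r x) (rPlus r y) = rPlus r (dualBr br r x y) ∧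
        mul (rPlus r x) (rPlus r y) = rPlus r (dualMul mul r x y) := by
  rw [IsPYBESolution, cybe_eq_zero_iff, aybe_eq_zero_iff r hcomm]
  simp only [forall_and]

lemma cybe_neg : cybe br (-r) = cybe br r := by
  simp only [cybe, TensorProduct.neg_tmul, TensorProduct.tmul_neg, neg_neg]

lemma aybe_neg : aybe mul (-r) = aybe mul r := by
  simp only [aybe, TensorProduct.neg_tmul, TensorProduct.tmul_neg, neg_neg]

lemma cybe_tauT (hanti : ∀ a b, br a b = - br b a) :
    cybe br (tauT r) = - sigma13 k A (cybe br r) := by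
  refine pair3_ext fun x y z => ?_
  rw [map_neg, pair3_sigma13, pair3_cybe, pair3_cybe, tauT_tauT,
    hanti (rPlus (tauT r) y), hanti (rPlus r z) (rPlus r y), hanti (rPlus r z)]
  simp only [map_neg]
  ring

lemma aybe_tauT (hcomm : ∀ a b, mul a b = mul b a) :
    aybe mul (tauT r) = sigma13 k A (aybe mul r) := by
  refine pair3_ext fun x y z => ?_
  rw [pair3_sigma13, pair3_aybe, pair3_aybe, tauT_tauT,
    hcomm (rPlus (tauT r) y), hcomm (rPlus r z) (rPlus r y), hcomm (rPlus r z)]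
  ring

lemma isPYBESolution_neg_tauT_iff (hP : IsPoisson br mul) :
    IsPYBESolution br mul (-tauT r) ↔ IsPYBESolution br mul r := by
  rw [IsPYBESolution, IsPYBESolution, cybe_neg, aybe_neg, cybe_tauT r hP.antisymm,
    aybe_tauT r hP.comm, neg_eq_zero, map_eq_zero_iff _ sigma13_involutive.injective,
    map_eq_zero_iff _ sigma13_involutive.injective]

end YangBaxter

end PoissonYangBaxter

theorem statement1_general {k A : Type*} [Field k] [AddCommGroup A] [Module k A]
    (br mul : A →ₗ[k] A →ₗ[k] A) (hP : IsPoisson br mul) (r : A ⊗[k] A) :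
    (IsPYBESolution br mul r ↔
      (∀ x y : Module.Dual k A,
        br (rPlus r x) (rPlus r y) =
          rPlus r (- (br (rPlus r x)).dualMap y + (br (rMinus r y)).dualMap x) ∧
        mul (rPlus r x) (rPlus r y) =
          rPlus r ((mul (rPlus r x)).dualMap y + (mul (rMinus r y)).dualMap x))) ∧
    (IsPYBESolution br mul r ↔
      (∀ x y : Module.Dual k A,
        br (rMinus r x) (rMinus r y) =
          rMinus r (- (br (rMinus r x)).dualMap y + (br (rPlus r y)).dualMap x) ∧
        mul (rMinus r x) (rMinus r y) =
          rMinus r ((mul (rMinus r x)).dualMap y + (mul (rPlus r y)).dualMap x))) := by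
  refine ⟨isPYBESolution_iff_rPlus r hP.comm, ?_⟩
  rw [← isPYBESolution_neg_tauT_iff r hP, isPYBESolution_iff_rPlus _ hP.comm]
  simp only [dualBr, dualMul, LinearMap.mk₂_apply, rPlus_neg_tauT, rMinus_neg_tauT]

/-- characterization of solutions of the Poisson Yang–Baxter equation via
`r₊` and via `r₋`. -/
theorem statement1 {k A : Type*} [Field k] [AddCommGroup A] [Module k A]
    [FiniteDimensional k A]
    (br mul : A →ₗ[k] A →ₗ[k] A) (hP : IsPoisson br mul) (r : A ⊗[k] A) :
    (IsPYBESolution br mul r ↔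
      (∀ x y : Module.Dual k A,
        br (rPlus r x) (rPlus r y) =
          rPlus r (- (br (rPlus r x)).dualMap y + (br (rMinus r y)).dualMap x) ∧
        mul (rPlus r x) (rPlus r y) =
          rPlus r ((mul (rPlus r x)).dualMap y + (mul (rMinus r y)).dualMap x))) ∧
    (IsPYBESolution br mul r ↔
      (∀ x y : Module.Dual k A,
        br (rMinus r x) (rMinus r y) =
          rMinus r (- (br (rMinus r x)).dualMap y + (br (rPlus r y)).dualMap x) ∧
        mul (rMinus r x) (rMinus r y) =
          rMinus r ((mul (rMinus r x)).dualMap y + (mul (rPlus r y)).dualMap x))) :=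
  statement1_general br mul hP r
end

section
/- Let (A,[·,·]_A,·_A) be a finite-dimensional Poisson algebra over a field. Define on 𝔄 = A ⊕ A* the operations [(a,x*),(b,y*)] = ([a,b]_A, −ad*(a)y* + ad*(b)x*) and (a,x*)·(b,y*) = (a·_A b, L*(a)y* + L*(b)x*), and the bilinear form 𝔅_d((a,x*),(b,y*)) = ⟨a,y*⟩ + ⟨b,x*⟩. Then (𝔄,[·,·],·,𝔅_d) is a quadratic Poisson algebra, i.e., 𝔄 is a Poisson algebra and 𝔅_d is a nondegenerate symmetric invariant bilinear form on it. -/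
/-!
`A ⊕ A*` is the semidirect product of `A` with its coadjoint and coregular representations.
Evaluating the `A*`-component of each Poisson axiom at a test vector `d ∈ A` turns it into
identities of `A` applied to `d`; invariance of `𝔅_d` reduces to antisymmetry of the bracket and
commutativity of the product, and nondegeneracy to the fact that `A*` separates the points of `A`.
-/

open TensorProduct

section SemidirectProduct

variable {k A : Type*} [Field k] [AddCommGroup A] [Module k A] {br mul : A →ₗ[k] A →ₗ[k] A}

@[simp] lemma sdBr_fst (p q : A × Module.Dual k A) : (sdBr br p q).1 = br p.1 q.1 := rfl

@[simp] lemma sdBr_snd_apply (p q : A × Module.Dual k A) (d : A) :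
    (sdBr br p q).2 d = p.2 (br q.1 d) - q.2 (br p.1 d) := by
  simp [sdBr, sub_eq_neg_add]

@[simp] lemma sdMul_fst (p q : A × Module.Dual k A) : (sdMul mul p q).1 = mul p.1 q.1 := rfl

@[simp] lemma sdMul_snd_apply (p q : A × Module.Dual k A) (d : A) :
    (sdMul mul p q).2 d = q.2 (mul p.1 d) + p.2 (mul q.1 d) := by
  simp [sdMul]

@[simp] lemma sdForm_apply (p q : A × Module.Dual k A) :
    sdForm p q = q.2 p.1 + p.2 q.1 := rfl

lemma sdBr_antisymm (h : ∀ a b, br a b = -br b a) (p q : A × Module.Dual k A) :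
    sdBr br p q = -sdBr br q p :=
  Prod.ext (by simpa using h p.1 q.1) (LinearMap.ext fun d => by simp)

lemma sdBr_jacobi (h : ∀ a b c, br a (br b c) = br (br a b) c + br b (br a c))
    (p q w : A × Module.Dual k A) :
    sdBr br p (sdBr br q w) = sdBr br (sdBr br p q) w + sdBr br q (sdBr br p w) := by
  refine Prod.ext (by simpa using h p.1 q.1 w.1) (LinearMap.ext fun d => ?_)
  have hp := congrArg p.2 (h q.1 w.1 d)
  have hq := congrArg q.2 (h p.1 w.1 d)
  have hw := congrArg w.2 (h p.1 q.1 d)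
  simp only [map_add] at hp hq hw
  simp only [sdBr_snd_apply, sdBr_fst, Prod.snd_add, LinearMap.add_apply]
  linear_combination hq - hp - hw

lemma sdMul_comm (h : ∀ a b, mul a b = mul b a) (p q : A × Module.Dual k A) :
    sdMul mul p q = sdMul mul q p :=
  Prod.ext (by simpa using h p.1 q.1) (LinearMap.ext fun d => by simp [add_comm])

lemma sdMul_assoc (hcomm : ∀ a b, mul a b = mul b a)
    (hassoc : ∀ a b c, mul (mul a b) c = mul a (mul b c)) (p q w : A × Module.Dual k A) :
    sdMul mul (sdMul mul p q) w = sdMul mul p (sdMul mul q w) := by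
  refine Prod.ext (by simpa using hassoc p.1 q.1 w.1) (LinearMap.ext fun d => ?_)
  have hw : mul (mul p.1 q.1) d = mul q.1 (mul p.1 d) := by
    rw [hcomm p.1 q.1, hassoc]
  have hq : mul p.1 (mul w.1 d) = mul w.1 (mul p.1 d) := by
    rw [← hassoc, hcomm p.1 w.1, hassoc]
  have hp : mul q.1 (mul w.1 d) = mul (mul q.1 w.1) d := (hassoc q.1 w.1 d).symm
  simp only [sdMul_snd_apply, sdMul_fst]
  linear_combination congrArg w.2 hw + congrArg q.2 hq + congrArg p.2 hp

lemma br_mul_left_eq (hanti : ∀ a b, br a b = -br b a) (hcomm : ∀ a b, mul a b = mul b a)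
    (hleib : ∀ a b c, br a (mul b c) = mul (br a b) c + mul b (br a c)) (b c d : A) :
    br (mul b c) d = br b (mul c d) + br c (mul b d) := by
  rw [hanti (mul b c) d, hleib d b c, hleib b c d, hleib c b d, hanti d b, hanti d c, hanti c b]
  simp only [map_neg, LinearMap.neg_apply]
  rw [hcomm (br b d) c]
  abel

lemma sdBr_sdMul_leibniz (hanti : ∀ a b, br a b = -br b a) (hcomm : ∀ a b, mul a b = mul b a)
    (hleib : ∀ a b c, br a (mul b c) = mul (br a b) c + mul b (br a c))
    (p q w : A × Module.Dual k A) :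
    sdBr br p (sdMul mul q w) = sdMul mul (sdBr br p q) w + sdMul mul q (sdBr br p w) := by
  refine Prod.ext (by simpa using hleib p.1 q.1 w.1) (LinearMap.ext fun d => ?_)
  have hp := congrArg p.2 (br_mul_left_eq hanti hcomm hleib q.1 w.1 d)
  have hq := congrArg q.2 (hleib p.1 w.1 d)
  have hw := congrArg w.2 (hleib p.1 q.1 d)
  simp only [map_add] at hp hq hw
  simp only [sdBr_snd_apply, sdBr_fst, sdMul_snd_apply, sdMul_fst, Prod.snd_add,
    LinearMap.add_apply]
  linear_combination hp + hq + hw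

theorem IsPoisson.sdBr_sdMul (hP : IsPoisson br mul) : IsPoisson (sdBr br) (sdMul mul) where
  antisymm := sdBr_antisymm hP.antisymm
  jacobi := sdBr_jacobi hP.jacobi
  comm := sdMul_comm hP.comm
  assoc := sdMul_assoc hP.comm hP.assoc
  leibniz := sdBr_sdMul_leibniz hP.antisymm hP.comm hP.leibniz

lemma sdForm_comm (p q : A × Module.Dual k A) : sdForm p q = sdForm q p := by
  simp [add_comm]

lemma eq_zero_of_forall_sdForm_eq_zero (p : A × Module.Dual k A)
    (h : ∀ q : A × Module.Dual k A, sdForm p q = 0) : p = 0 := by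
  refine Prod.ext ((Module.forall_dual_apply_eq_zero_iff k p.1).mp fun y => ?_)
    (LinearMap.ext fun b => ?_)
  · simpa using h (0, y)
  · simpa using h (b, 0)

lemma sdForm_sdBr (hanti : ∀ a b, br a b = -br b a) (p q w : A × Module.Dual k A) :
    sdForm (sdBr br p q) w = sdForm p (sdBr br q w) := by
  have hw := congrArg w.2 (hanti p.1 q.1)
  have hq := congrArg q.2 (hanti p.1 w.1)
  simp only [map_neg] at hw hq
  simp only [sdForm_apply, sdBr_fst, sdBr_snd_apply]
  linear_combination hw - hq

lemma sdForm_sdMul (hcomm : ∀ a b, mul a b = mul b a) (p q w : A × Module.Dual k A) :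
    sdForm (sdMul mul p q) w = sdForm p (sdMul mul q w) := by
  simp only [sdForm_apply, sdMul_fst, sdMul_snd_apply]
  linear_combination congrArg w.2 (hcomm p.1 q.1) + congrArg q.2 (hcomm p.1 w.1)

end SemidirectProduct

theorem statement3_general {k A : Type*} [Field k] [AddCommGroup A] [Module k A]
    (br mul : A →ₗ[k] A →ₗ[k] A) (hP : IsPoisson br mul) :
    IsPoisson (sdBr br) (sdMul mul) ∧
    (∀ p q : A × Module.Dual k A, sdForm p q = sdForm q p) ∧
    (∀ p, (∀ q : A × Module.Dual k A, sdForm p q = 0) → p = 0) ∧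
    (∀ p q w : A × Module.Dual k A, sdForm (sdBr br p q) w = sdForm p (sdBr br q w)) ∧
    (∀ p q w : A × Module.Dual k A, sdForm (sdMul mul p q) w = sdForm p (sdMul mul q w)) := by
  exact ⟨hP.sdBr_sdMul, sdForm_comm, eq_zero_of_forall_sdForm_eq_zero, sdForm_sdBr hP.antisymm,
    sdForm_sdMul hP.comm⟩

/-- the semidirect product `A ⋉ A*` together with the canonical bilinear form
`𝔅_d` is a quadratic Poisson algebra. -/
theorem statement3 {k A : Type*} [Field k] [AddCommGroup A] [Module k A]
    [FiniteDimensional k A]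
    (br mul : A →ₗ[k] A →ₗ[k] A) (hP : IsPoisson br mul) :
    IsPoisson (sdBr br) (sdMul mul) ∧
    (∀ p q : A × Module.Dual k A, sdForm p q = sdForm q p) ∧
    (∀ p, (∀ q : A × Module.Dual k A, sdForm p q = 0) → p = 0) ∧
    (∀ p q w : A × Module.Dual k A, sdForm (sdBr br p q) w = sdForm p (sdBr br q w)) ∧
    (∀ p q w : A × Module.Dual k A, sdForm (sdMul mul p q) w = sdForm p (sdMul mul q w)) :=
  statement3_general br mul hP
end

section
/- Let (A,[·,·],·,𝔅) be a finite-dimensional quadratic Poisson algebra, I_𝔅: A* → A the linear isomorphism induced by 𝔅, and r ∈ A⊗A. Set P := r₊ ∘ I_𝔅⁻¹ and I_r := r₊ − r₋. Then r is a solution of the Poisson Yang–Baxter equation in (A,[·,·],·) if and only if for all a,b ∈ A: [P(a),P(b)] = P([P(a),b] + [a,P(b)] − [a,(I_r ∘ I_𝔅⁻¹)(b)]) and P(a)·P(b) = P(P(a)·b + a·P(b) − a·(I_r ∘ I_𝔅⁻¹)(b)). -/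
open TensorProduct

/-!
Over a field a tensor `t ∈ A ⊗ (A ⊗ A)` vanishes as soon as all its contractions
`x ⊗ y ⊗ id` with functionals on the first two legs do. For any bilinear `m`, the contraction of
`r₁₂ ∘ r₁₃ + r₁₃ ∘ r₂₃ − r₂₃ ∘ r₁₂` is `m(r₊x, r₊y) − r₊(m(r₋y)* x) − r₊(m(·, r₊x)* y)`, and
invariance and symmetry of `𝔅` turn these transposed multiplications into products under
`I_𝔅`; at `x = I_𝔅⁻¹ a`, `y = I_𝔅⁻¹ b` this is exactly the defect of the identity for `P`.
Antisymmetry gives `[r₁₂, r₂₃] = −[r₂₃, r₁₂]`, so `C(r)` is `A(r)` with the bracket as product.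
-/

namespace TensorProduct

variable {R M N P : Type*} [CommRing R] [AddCommGroup M] [Module R M] [AddCommGroup N]
  [Module R N] [AddCommGroup P] [Module R P]

theorem eq_zero_of_forall_lid_rTensor_eq_zero [Module.Free R M] {t : M ⊗[R] N}
    (h : ∀ f : Module.Dual R M, TensorProduct.lid R N (f.rTensor N t) = 0) : t = 0 := by
  let b := Module.Free.chooseBasis R M
  apply (equivFinsuppOfBasisLeft b).injective
  ext i
  simpa [equivFinsuppOfBasisLeft_apply] using h (b.coord i)

noncomputable def contract₁₂ (x : Module.Dual R M) (y : Module.Dual R N) :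
    M ⊗[R] (N ⊗[R] P) →ₗ[R] P :=
  TensorProduct.lid R P ∘ₗ y.rTensor P ∘ₗ TensorProduct.lid R (N ⊗[R] P) ∘ₗ x.rTensor (N ⊗[R] P)

@[simp]
theorem contract₁₂_tmul (x : Module.Dual R M) (y : Module.Dual R N) (u : M) (v : N) (w : P) :
    contract₁₂ x y (u ⊗ₜ[R] (v ⊗ₜ[R] w)) = (x u * y v) • w := by
  simp [contract₁₂, mul_smul, smul_comm (x _)]

theorem eq_zero_of_forall_contract₁₂_eq_zero [Module.Free R M] [Module.Free R N]
    {t : M ⊗[R] (N ⊗[R] P)} (h : ∀ x y, contract₁₂ x y t = 0) : t = 0 :=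
  eq_zero_of_forall_lid_rTensor_eq_zero fun x ↦ eq_zero_of_forall_lid_rTensor_eq_zero (h x)

end TensorProduct

open TensorProduct

section YangBaxter

variable {k A : Type*} [Field k] [AddCommGroup A] [Module k A] (m : A →ₗ[k] A →ₗ[k] A)

theorem T1223_eq_neg_T2312 (hm : ∀ a b, m a b = - m b a) : T1223 m = - T2312 m :=
  ext_fourfold' fun a b c d ↦ by simp [T1223, T2312, hm c b, neg_tmul]

theorem cybe_eq_aybe (hm : ∀ a b, m a b = - m b a) (r : A ⊗[k] A) : cybe m r = aybe m r := by
  rw [cybe, aybe, T1223_eq_neg_T2312 m hm, LinearMap.neg_apply]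
  abel

variable (x y : Module.Dual k A) (r r' : A ⊗[k] A)

theorem contract₁₂_T1213 :
    contract₁₂ x y (T1213 m (r ⊗ₜ[k] r')) = - rPlus r' ((m (rMinus r y)).dualMap x) := by
  induction r using TensorProduct.induction_on with
  | zero => simp [LinearMap.dualMap_def]
  | add r₁ r₂ h₁ h₂ =>
    simp only [add_tmul, map_add, LinearMap.add_apply, dualMap_add_apply, neg_add, h₁, h₂]
  | tmul a b =>
    induction r' using TensorProduct.induction_on with
    | zero => simp
    | add r₁ r₂ h₁ h₂ => simp only [tmul_add, map_add, LinearMap.add_apply, neg_add, h₁, h₂]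
    | tmul c d => simp [T1213, rMinus, tauT, mul_smul, smul_comm (x _)]

theorem contract₁₂_T1323 :
    contract₁₂ x y (T1323 m (r ⊗ₜ[k] r')) = m (rPlus r x) (rPlus r' y) := by
  induction r using TensorProduct.induction_on with
  | zero => simp
  | add r₁ r₂ h₁ h₂ => simp only [add_tmul, map_add, LinearMap.add_apply, h₁, h₂]
  | tmul a b =>
    induction r' using TensorProduct.induction_on with
    | zero => simp
    | add r₁ r₂ h₁ h₂ => simp only [tmul_add, map_add, LinearMap.add_apply, h₁, h₂]
    | tmul c d => simp [T1323, mul_smul, smul_comm (x _)]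

theorem contract₁₂_T2312 :
    contract₁₂ x y (T2312 m (r ⊗ₜ[k] r')) = rPlus r' ((m.flip (rPlus r x)).dualMap y) := by
  induction r using TensorProduct.induction_on with
  | zero => simp [LinearMap.dualMap_def]
  | add r₁ r₂ h₁ h₂ =>
    simp only [add_tmul, map_add, LinearMap.add_apply, dualMap_add_apply, h₁, h₂]
  | tmul a b =>
    induction r' using TensorProduct.induction_on with
    | zero => simp
    | add r₁ r₂ h₁ h₂ => simp only [tmul_add, map_add, LinearMap.add_apply, h₁, h₂]
    | tmul c d => simp [T2312, mul_smul, smul_comm (x _)]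

theorem contract₁₂_aybe :
    contract₁₂ x y (aybe m r) = m (rPlus r x) (rPlus r y) - rPlus r ((m (rMinus r y)).dualMap x)
      - rPlus r ((m.flip (rPlus r x)).dualMap y) := by
  rw [aybe, map_sub, map_add, contract₁₂_T1213, contract₁₂_T1323, contract₁₂_T2312]
  abel

end YangBaxter

section InvariantForm

variable {k A : Type*} [Field k] [AddCommGroup A] [Module k A]
  {m : A →ₗ[k] A →ₗ[k] A} {B : A →ₗ[k] A →ₗ[k] k}

theorem dualMap_form_eq_of_invariant (hinv : ∀ a b c, B (m a b) c = B a (m b c)) (u a : A) :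
    (m u).dualMap (B a) = B (m a u) :=
  LinearMap.ext fun w ↦ (hinv a u w).symm

theorem dualMap_flip_form_eq_of_invariant (hsym : ∀ a b, B a b = B b a)
    (hinv : ∀ a b c, B (m a b) c = B a (m b c)) (u a : A) :
    (m.flip u).dualMap (B a) = B (m u a) :=
  LinearMap.ext fun w ↦ by
    simp only [LinearMap.dualMap_apply, LinearMap.flip_apply]
    rw [hsym, hinv, hsym]

theorem aybe_eq_zero_iff_s6 (hsym : ∀ a b, B a b = B b a)
    (hinv : ∀ a b c, B (m a b) c = B a (m b c))
    (IB : Module.Dual k A ≃ₗ[k] A) (hIB : ∀ a b, IB.symm a b = B a b) (r : A ⊗[k] A) :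
    aybe m r = 0 ↔ ∀ a b : A, m (rPlus r (IB.symm a)) (rPlus r (IB.symm b)) =
      rPlus r (IB.symm (m (rPlus r (IB.symm a)) b + m a (rPlus r (IB.symm b)) -
        m a (rPlus r (IB.symm b) - rMinus r (IB.symm b)))) := by
  have hB (a : A) : IB.symm a = B a := LinearMap.ext (hIB a)
  have contract_eq (a b : A) : contract₁₂ (IB.symm a) (IB.symm b) (aybe m r) =
      m (rPlus r (IB.symm a)) (rPlus r (IB.symm b)) -
        rPlus r (IB.symm (m (rPlus r (IB.symm a)) b + m a (rPlus r (IB.symm b)) -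
          m a (rPlus r (IB.symm b) - rMinus r (IB.symm b)))) := by
    simp only [contract₁₂_aybe, hB, dualMap_form_eq_of_invariant hinv,
      dualMap_flip_form_eq_of_invariant hsym hinv, map_sub, map_add]
    abel
  constructor
  · intro h a b
    rw [← sub_eq_zero, ← contract_eq, h, map_zero]
  · intro h
    refine eq_zero_of_forall_contract₁₂_eq_zero fun x y ↦ ?_
    obtain ⟨a, rfl⟩ := IB.symm.surjective x
    obtain ⟨b, rfl⟩ := IB.symm.surjective y
    rw [contract_eq, h, sub_self]

end InvariantForm

theorem statement6_general {k A : Type*} [Field k] [AddCommGroup A] [Module k A]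
    (br mul : A →ₗ[k] A →ₗ[k] A) (hP : IsPoisson br mul)
    (B : A →ₗ[k] A →ₗ[k] k) (hsym : ∀ a b, B a b = B b a)
    (hbrinv : ∀ a b c, B (br a b) c = B a (br b c))
    (hmulinv : ∀ a b c, B (mul a b) c = B a (mul b c))
    (IB : Module.Dual k A ≃ₗ[k] A) (hIB : ∀ a b, IB.symm a b = B a b)
    (r : A ⊗[k] A) :
    IsPYBESolution br mul r ↔
      (∀ a b : A,
        br (rPlus r (IB.symm a)) (rPlus r (IB.symm b)) =
          rPlus r (IB.symm
            (br (rPlus r (IB.symm a)) b + br a (rPlus r (IB.symm b)) -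
              br a (rPlus r (IB.symm b) - rMinus r (IB.symm b)))) ∧
        mul (rPlus r (IB.symm a)) (rPlus r (IB.symm b)) =
          rPlus r (IB.symm
            (mul (rPlus r (IB.symm a)) b + mul a (rPlus r (IB.symm b)) -
              mul a (rPlus r (IB.symm b) - rMinus r (IB.symm b))))) := by
  rw [IsPYBESolution, cybe_eq_aybe br hP.antisymm, aybe_eq_zero_iff_s6 hsym hbrinv IB hIB,
    aybe_eq_zero_iff_s6 hsym hmulinv IB hIB]
  simp only [forall_and]

/-- in a quadratic Poisson algebra, `r` solves the Poisson Yang–Baxter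
equation iff `P = r₊ ∘ I_𝔅⁻¹` satisfies the stated (generalized Rota–Baxter) identities. -/
theorem statement6 {k A : Type*} [Field k] [AddCommGroup A] [Module k A]
    [FiniteDimensional k A]
    (br mul : A →ₗ[k] A →ₗ[k] A) (hP : IsPoisson br mul)
    (B : A →ₗ[k] A →ₗ[k] k) (hsym : ∀ a b, B a b = B b a)
    (hbrinv : ∀ a b c, B (br a b) c = B a (br b c))
    (hmulinv : ∀ a b c, B (mul a b) c = B a (mul b c))
    (IB : Module.Dual k A ≃ₗ[k] A) (hIB : ∀ a b, IB.symm a b = B a b)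
    (r : A ⊗[k] A) :
    IsPYBESolution br mul r ↔
      (∀ a b : A,
        br (rPlus r (IB.symm a)) (rPlus r (IB.symm b)) =
          rPlus r (IB.symm
            (br (rPlus r (IB.symm a)) b + br a (rPlus r (IB.symm b)) -
              br a (rPlus r (IB.symm b) - rMinus r (IB.symm b)))) ∧
        mul (rPlus r (IB.symm a)) (rPlus r (IB.symm b)) =
          rPlus r (IB.symm
            (mul (rPlus r (IB.symm a)) b + mul a (rPlus r (IB.symm b)) -
              mul a (rPlus r (IB.symm b) - rMinus r (IB.symm b))))) :=
  statement6_general br mul hP B hsym hbrinv hmulinv IB hIB r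
end

section
/- Let (A,[·,·]_A,·_A) and (A*,[·,·]_{A*},·_{A*}) be finite-dimensional Poisson algebras such that the operations on 𝔄 = A ⊕ A* defined by [(a,x*),(b,y*)]_𝔄 = ([a,b]_A − ad*_{[,]_{A*}}(x*)b + ad*_{[,]_{A*}}(y*)a, [x*,y*]_{A*} − ad*_{[,]_A}(a)y* + ad*_{[,]_A}(b)x*) and (a,x*)·_𝔄(b,y*) = (a·_A b + L*_{·_{A*}}(x*)b + L*_{·_{A*}}(y*)a, x*·_{A*}y* + L*_{·_A}(a)y* + L*_{·_A}(b)x*) make (𝔄,[·,·]_𝔄,·_𝔄) a Poisson algebra (the Drinfeld classical double). Let {e₁,…,eₙ} be a basis of A, {e₁*,…,eₙ*} the dual basis of A*, and r = Σᵢ eᵢ⊗eᵢ* ∈ 𝔄⊗𝔄. Then the symmetric part S = ½Σᵢ(eᵢ⊗eᵢ* + eᵢ*⊗eᵢ) of r is (ad,L)-invariant in (𝔄,[·,·]_𝔄,·_𝔄), and the map I_r = r₊ − r₋: 𝔄* → 𝔄, which sends (x*,a) ↦ (a,x*), is a linear isomorphism. -/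
open TensorProduct

variable {k A : Type*} [Field k] [AddCommGroup A] [Module k A]

/-- The bracket of the Drinfeld classical double on `𝔄 = A ⊕ A*`:
`[(a,x*),(b,y*)] = ([a,b] − ad*_{A*}(x*)b + ad*_{A*}(y*)a,
[x*,y*]_{A*} − ad*_A(a)y* + ad*_A(b)x*)`, where `ad*_{A*}(x*)` acts on `A` through the
identification `A ≅ A**`. -/
noncomputable def dblBr [FiniteDimensional k A] (br : A →ₗ[k] A →ₗ[k] A)
    (brD : Module.Dual k A →ₗ[k] Module.Dual k A →ₗ[k] Module.Dual k A) :
    (A × Module.Dual k A) →ₗ[k] (A × Module.Dual k A) →ₗ[k] (A × Module.Dual k A) :=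
  LinearMap.mk₂ k
    (fun p q =>
      (br p.1 q.1
          - (Module.evalEquiv k A).symm ((brD p.2).dualMap (Module.evalEquiv k A q.1))
          + (Module.evalEquiv k A).symm ((brD q.2).dualMap (Module.evalEquiv k A p.1)),
        brD p.2 q.2 - (br p.1).dualMap q.2 + (br q.1).dualMap p.2))
    (fun p p' q => by simp [Prod.ext_iff, map_add]; constructor <;> abel)
    (fun c p q => by simp [Prod.ext_iff, map_smul, smul_add, smul_sub])
    (fun p q q' => by simp [Prod.ext_iff, map_add]; constructor <;> abel)
    (fun c p q => by simp [Prod.ext_iff, map_smul, smul_add, smul_sub])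

/-- The multiplication of the Drinfeld classical double on `𝔄 = A ⊕ A*`. -/
noncomputable def dblMul [FiniteDimensional k A] (mul : A →ₗ[k] A →ₗ[k] A)
    (mulD : Module.Dual k A →ₗ[k] Module.Dual k A →ₗ[k] Module.Dual k A) :
    (A × Module.Dual k A) →ₗ[k] (A × Module.Dual k A) →ₗ[k] (A × Module.Dual k A) :=
  LinearMap.mk₂ k
    (fun p q =>
      (mul p.1 q.1
          + (Module.evalEquiv k A).symm ((mulD p.2).dualMap (Module.evalEquiv k A q.1))
          + (Module.evalEquiv k A).symm ((mulD q.2).dualMap (Module.evalEquiv k A p.1)),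
        mulD p.2 q.2 + (mul p.1).dualMap q.2 + (mul q.1).dualMap p.2))
    (fun p p' q => by simp [Prod.ext_iff, map_add]; constructor <;> abel)
    (fun c p q => by simp [Prod.ext_iff, map_smul, smul_add])
    (fun p q q' => by simp [Prod.ext_iff, map_add]; constructor <;> abel)
    (fun c p q => by simp [Prod.ext_iff, map_smul, smul_add])

/-! Let `φ : 𝔄 ≃ 𝔄*` be the canonical pairing `φ (a, x*) (b, y*) = y*(a) + x*(b)` of the double.
The element `Ω = r + τ r = 2 S` is the Casimir element of `φ`: expanding in the dual bases gives
`Ω₊ = φ⁻¹`. Since `r₋ = -(τ r)₊`, also `I_r = r₊ - r₋ = Ω₊ = φ⁻¹`, which is the formula for `I_r`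
and shows that it is bijective.

As `t ↦ t₊` is injective in finite dimension and `((T' ⊗ id) t)₊ = t₊ ∘ T'*`,
`((id ⊗ T) t)₊ = T ∘ t₊`, the identity `Ω₊ = φ⁻¹` gives `(T' ⊗ id) Ω = (id ⊗ T) Ω` whenever `T'` is
the `φ`-adjoint of `T`. On the double, `ad u` is `φ`-skew-adjoint and `L u` is `φ`-self-adjoint,
so `S` is `(ad, L)`-invariant. -/

section RPlus

variable {V : Type*} [AddCommGroup V] [Module k V]

lemma rPlus_sub_rMinus (t : V ⊗[k] V) : rPlus t - rMinus t = rPlus (t + tauT t) := by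
  rw [rMinus, LinearMap.neg_apply, LinearMap.comp_apply, sub_neg_eq_add, map_add]

lemma rPlus_map_left (T : V →ₗ[k] V) (t : V ⊗[k] V) :
    rPlus (TensorProduct.map T LinearMap.id t) = rPlus t ∘ₗ T.dualMap := by
  induction t using TensorProduct.induction_on with
  | zero => simp
  | tmul x y => ext f; simp
  | add s t hs ht => rw [map_add, map_add, hs, ht, map_add, LinearMap.add_comp]

lemma rPlus_map_right (T : V →ₗ[k] V) (t : V ⊗[k] V) :
    rPlus (TensorProduct.map LinearMap.id T t) = T ∘ₗ rPlus t := by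
  induction t using TensorProduct.induction_on with
  | zero => simp
  | tmul x y => ext f; simp
  | add s t hs ht => rw [map_add, map_add, hs, ht, map_add, LinearMap.comp_add]

lemma IsAdLInvariant.smul {br mul : V →ₗ[k] V →ₗ[k] V} {s : V ⊗[k] V}
    (h : IsAdLInvariant br mul s) (c : k) : IsAdLInvariant br mul (c • s) := fun u => by
  simp only [map_smul, ← smul_add, ← smul_sub, (h u).1, (h u).2, smul_zero, and_self]

variable [FiniteDimensional k V]

lemma rPlus_injective :
    Function.Injective (rPlus : V ⊗[k] V →ₗ[k] Module.Dual k V →ₗ[k] V) := by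
  have h : (rPlus : V ⊗[k] V →ₗ[k] Module.Dual k V →ₗ[k] V) =
      dualTensorHom k (Module.Dual k V) V ∘ₗ
        TensorProduct.map (Module.evalEquiv k V).toLinearMap LinearMap.id := by
    ext x y f
    simp
  rw [h, LinearMap.coe_comp]
  exact (dualTensorHom_bijective ..).injective.comp
    (TensorProduct.congr (Module.evalEquiv k V) (LinearEquiv.refl k V)).injective

lemma map_left_eq_map_right_of_rPlus_eq_symm (φ : V ≃ₗ[k] Module.Dual k V) {t : V ⊗[k] V}
    (ht : rPlus t = φ.symm.toLinearMap) {T T' : V →ₗ[k] V}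
    (hadj : ∀ v w, φ (T v) w = φ v (T' w)) :
    TensorProduct.map T' LinearMap.id t = TensorProduct.map LinearMap.id T t := by
  have hφ : T'.dualMap ∘ₗ φ.toLinearMap = φ.toLinearMap ∘ₗ T := by
    ext v w
    exact (hadj v w).symm
  apply rPlus_injective
  rw [rPlus_map_left, rPlus_map_right, ht]
  refine (LinearMap.cancel_right φ.surjective).mp ?_
  rw [LinearMap.comp_assoc, hφ, ← LinearMap.comp_assoc, LinearEquiv.symm_comp,
    LinearMap.comp_assoc, LinearEquiv.symm_comp]
  rfl

lemma isAdLInvariant_of_rPlus_eq_symm (φ : V ≃ₗ[k] Module.Dual k V) {t : V ⊗[k] V}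
    (ht : rPlus t = φ.symm.toLinearMap) {br mul : V →ₗ[k] V →ₗ[k] V}
    (hbr : ∀ u v w, φ (br u v) w = - φ v (br u w))
    (hmul : ∀ u v w, φ (mul u v) w = φ v (mul u w)) :
    IsAdLInvariant br mul t := fun u => by
  have hbr' : TensorProduct.map (br u) LinearMap.id t =
      TensorProduct.map LinearMap.id (-br u) t :=
    map_left_eq_map_right_of_rPlus_eq_symm φ ht fun v w => by
      rw [LinearMap.neg_apply, map_neg, LinearMap.neg_apply, hbr, neg_neg]
  refine ⟨?_, ?_⟩
  · rw [hbr', ← LinearMap.add_apply, ← TensorProduct.map_add_right, neg_add_cancel,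
      TensorProduct.map_zero_right, LinearMap.zero_apply]
  · rw [map_left_eq_map_right_of_rPlus_eq_symm φ ht (hmul u), sub_self]

end RPlus

noncomputable def casimir {ι : Type*} [Fintype ι] (b : Module.Basis ι k A) :
    (A × Module.Dual k A) ⊗[k] (A × Module.Dual k A) :=
  ∑ i, (((b i, 0) : A × Module.Dual k A) ⊗ₜ[k] ((0, b.coord i) : A × Module.Dual k A)
    + ((0, b.coord i) : A × Module.Dual k A) ⊗ₜ[k] ((b i, 0) : A × Module.Dual k A))

section ClassicalDouble

variable [FiniteDimensional k A]

variable (k A) in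
noncomputable def sdFormEquiv :
    (A × Module.Dual k A) ≃ₗ[k] Module.Dual k (A × Module.Dual k A) :=
  ((LinearEquiv.prodComm k A (Module.Dual k A)).trans
    ((LinearEquiv.refl k (Module.Dual k A)).prodCongr (Module.evalEquiv k A))).trans
    (Module.dualProdDualEquivDual k A (Module.Dual k A))

lemma sdFormEquiv_apply (p : A × Module.Dual k A) : sdFormEquiv k A p = sdForm p := by
  refine LinearMap.ext fun q => ?_
  simp [sdFormEquiv, sdForm, add_comm]

lemma sdFormEquiv_mk (a : A) (x : Module.Dual k A) :
    sdFormEquiv k A (a, x) =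
      Module.dualProdDualEquivDual k A (Module.Dual k A) (x, Module.Dual.eval k A a) :=
  rfl

lemma sdForm_dblBr {br : A →ₗ[k] A →ₗ[k] A} (hbr : ∀ a b, br a b = - br b a)
    {brD : Module.Dual k A →ₗ[k] Module.Dual k A →ₗ[k] Module.Dual k A}
    (hbrD : ∀ x y, brD x y = - brD y x) (u v w : A × Module.Dual k A) :
    sdForm (dblBr br brD u v) w = - sdForm v (dblBr br brD u w) := by
  obtain ⟨a, x⟩ := u; obtain ⟨b, y⟩ := v; obtain ⟨c, z⟩ := w
  simp only [sdForm, dblBr, LinearMap.mk₂_apply, map_sub, map_add, LinearMap.sub_apply,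
    LinearMap.add_apply, LinearMap.dualMap_apply, Module.apply_evalEquiv_symm_apply,
    Module.evalEquiv_apply, Module.Dual.eval_apply]
  rw [hbrD y z, hbr b c, LinearMap.neg_apply, map_neg]
  ring

lemma sdForm_dblMul {mul : A →ₗ[k] A →ₗ[k] A} (hmul : ∀ a b, mul a b = mul b a)
    {mulD : Module.Dual k A →ₗ[k] Module.Dual k A →ₗ[k] Module.Dual k A}
    (hmulD : ∀ x y, mulD x y = mulD y x) (u v w : A × Module.Dual k A) :
    sdForm (dblMul mul mulD u v) w = sdForm v (dblMul mul mulD u w) := by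
  obtain ⟨a, x⟩ := u; obtain ⟨b, y⟩ := v; obtain ⟨c, z⟩ := w
  simp only [sdForm, dblMul, LinearMap.mk₂_apply, map_add, LinearMap.add_apply,
    LinearMap.dualMap_apply, Module.apply_evalEquiv_symm_apply, Module.evalEquiv_apply,
    Module.Dual.eval_apply]
  rw [hmulD y z, hmul b c]
  ring

lemma rPlus_casimir {ι : Type*} [Fintype ι] (b : Module.Basis ι k A) :
    rPlus (casimir b) = (sdFormEquiv k A).symm.toLinearMap := by
  refine LinearMap.ext fun ξ => ?_
  obtain ⟨⟨a, x⟩, rfl⟩ := (sdFormEquiv k A).surjective ξ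
  rw [LinearEquiv.coe_coe, LinearEquiv.symm_apply_apply]
  simp only [casimir, map_sum, map_add, LinearMap.coe_sum, Finset.sum_apply, LinearMap.add_apply,
    rPlus_tmul, sdFormEquiv_apply, sdForm, LinearMap.mk₂_apply, map_zero, LinearMap.zero_apply,
    add_zero, zero_add]
  refine Prod.ext ?_ ?_
  · simp [Prod.fst_sum, Module.Basis.coord_apply]
  · simp [Prod.snd_sum]

end ClassicalDouble

theorem statement9_general [FiniteDimensional k A]
    (br mul : A →ₗ[k] A →ₗ[k] A) (hPA : IsPoisson br mul)
    (brD mulD : Module.Dual k A →ₗ[k] Module.Dual k A →ₗ[k] Module.Dual k A)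
    (hPD : IsPoisson brD mulD)
    (ι : Type*) [Fintype ι] (bA : Module.Basis ι k A)
    (r : (A × Module.Dual k A) ⊗[k] (A × Module.Dual k A))
    (hrdef : r = ∑ i : ι,
      (((bA i, 0) : A × Module.Dual k A) ⊗ₜ[k] ((0, bA.coord i) : A × Module.Dual k A)))
    (S : (A × Module.Dual k A) ⊗[k] (A × Module.Dual k A))
    (hSdef : S = (2 : k)⁻¹ • ∑ i : ι,
      ((((bA i, 0) : A × Module.Dual k A) ⊗ₜ[k] ((0, bA.coord i) : A × Module.Dual k A))
        + (((0, bA.coord i) : A × Module.Dual k A) ⊗ₜ[k] ((bA i, 0) : A × Module.Dual k A)))) :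
    IsAdLInvariant (dblBr br brD) (dblMul mul mulD) S ∧
    (∀ (x : Module.Dual k A) (a : A),
      (rPlus r - rMinus r)
        ((Module.dualProdDualEquivDual k A (Module.Dual k A))
          (x, Module.Dual.eval k A a)) = (a, x)) ∧
    Function.Bijective (rPlus r - rMinus r) := by
  have hΩ := rPlus_casimir bA
  have hIr : rPlus r - rMinus r = (sdFormEquiv k A).symm.toLinearMap := by
    rw [rPlus_sub_rMinus, ← hΩ, hrdef, casimir]
    simp only [tauT, map_sum, LinearEquiv.coe_coe, TensorProduct.comm_tmul,
      Finset.sum_add_distrib]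
  refine ⟨?_, fun x a => ?_, ?_⟩
  · rw [hSdef]
    refine (isAdLInvariant_of_rPlus_eq_symm (sdFormEquiv k A) hΩ ?_ ?_).smul _
    · simpa only [sdFormEquiv_apply] using sdForm_dblBr hPA.antisymm hPD.antisymm
    · simpa only [sdFormEquiv_apply] using sdForm_dblMul hPA.comm hPD.comm
  · rw [hIr, ← sdFormEquiv_mk]
    exact (sdFormEquiv k A).symm_apply_apply (a, x)
  · rw [hIr]
    exact (sdFormEquiv k A).symm.bijective

/-- for the Drinfeld classical double `𝔄 = A ⊕ A*` of a Poisson bialgebra and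
`r = Σᵢ eᵢ ⊗ eᵢ*`, the symmetric part `S = ½ Σᵢ (eᵢ ⊗ eᵢ* + eᵢ* ⊗ eᵢ)` of `r` is
`(ad, L)`-invariant in `𝔄`, and `I_r = r₊ − r₋ : 𝔄* → 𝔄`, `(x*, a) ↦ (a, x*)`, is a linear
isomorphism. -/
theorem statement9 [FiniteDimensional k A]
    (br mul : A →ₗ[k] A →ₗ[k] A) (hPA : IsPoisson br mul)
    (brD mulD : Module.Dual k A →ₗ[k] Module.Dual k A →ₗ[k] Module.Dual k A)
    (hPD : IsPoisson brD mulD)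
    (hDouble : IsPoisson (dblBr br brD) (dblMul mul mulD))
    (ι : Type*) [Fintype ι] [DecidableEq ι] (bA : Module.Basis ι k A)
    (r : (A × Module.Dual k A) ⊗[k] (A × Module.Dual k A))
    (hrdef : r = ∑ i : ι,
      (((bA i, 0) : A × Module.Dual k A) ⊗ₜ[k] ((0, bA.coord i) : A × Module.Dual k A)))
    (S : (A × Module.Dual k A) ⊗[k] (A × Module.Dual k A))
    (hSdef : S = (2 : k)⁻¹ • ∑ i : ι,
      ((((bA i, 0) : A × Module.Dual k A) ⊗ₜ[k] ((0, bA.coord i) : A × Module.Dual k A))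
        + (((0, bA.coord i) : A × Module.Dual k A) ⊗ₜ[k] ((bA i, 0) : A × Module.Dual k A)))) :
    IsAdLInvariant (dblBr br brD) (dblMul mul mulD) S ∧
    (∀ (x : Module.Dual k A) (a : A),
      (rPlus r - rMinus r)
        ((Module.dualProdDualEquivDual k A (Module.Dual k A))
          (x, Module.Dual.eval k A a)) = (a, x)) ∧
    Function.Bijective (rPlus r - rMinus r) :=
  statement9_general br mul hPA brD mulD hPD ι bA r hrdef S hSdef
end
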